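/- arXiv:1806.05464 — 4 statements merged into one kernel-verified Lean document; each statement's English description precedes it below -/
import Mathlib

section
/- Let t₀ ∈ ℝ, let x : [t₀,∞) → ℝⁿ and ξ : [t₀,∞) → ℝᵐ be continuous signals, and let {t_k}_{k≥0} be a strictly increasing sequence of sampling times with first element t₀. Define the auxiliary input r : [t₀,∞) → ℝᵐ by r(t) = ∫_{t_k}^{t} ξ(s) ds for t ∈ [t_k, t_{k+1}), and suppose each t_{k+1} is generated by the triggering law with a class K∞ function γ̄. Assume: (i) there exist class KL functions β̃, β and class K∞ functions γ̃, γ such that for all t₀ ≤ t₀′ ≤ t, ‖x(t)‖ ≤ max{β̃(‖x(t₀′)‖, t−t₀′), γ̃(‖r_[t₀′,t]‖)} and ‖ξ(t)‖ ≤ max{β(‖x(t₀′)‖, t−t₀′), γ(‖r_[t₀′,t]‖)}; (ii) limsup_{s→0⁺} γ(s)/s < ∞; (iii) there is a constant ε > 1 with γ̄(s) ≥ ε·γ(s) for all s > 0, and the limit lim_{s→0⁺} γ̄(s)/s exists and is positive and finite. Then (a) inf_{k≥0} (t_{k+1} − t_k) > 0 (no Zeno behavior occurs), and (b) x(t) →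 0, ξ(t) → 0 and r(t) → 0 as t → ∞. -/
/-!
The triggering law forces `γ̄ (‖r‖) ≤ sup ‖ξ‖` on every sampling period. Together with
`γ̄ ≥ ε γ`, the IOS estimate from a sampling time `t j` becomes the small-gain inequality
`‖ξ s‖ ≤ max (β (‖x (t j)‖, s - t j)) (sup ‖ξ‖ / ε)`. Since `ε > 1`, it first bounds `ξ`, hence `r`,
by constants, and then improves every tail bound of `‖ξ‖` by the factor `1 / ε`, so `ξ → 0`.
Because `γ̄ s / s` stays between two positive constants on `(0, R]`, a bounded `r` pins every
period `t (k+1) - t k = N / γ̄ N` between two positive constants: there is no Zeno behaviour,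
`t k → ∞`, `r → 0` along with `ξ`, and `x → 0` by the ISS estimate.
-/

open Filter Set

def IsClassKInf (γ : ℝ → ℝ) : Prop :=
  ContinuousOn γ (Set.Ici 0) ∧ StrictMonoOn γ (Set.Ici 0) ∧ γ 0 = 0 ∧
    Filter.Tendsto γ Filter.atTop Filter.atTop

def IsClassKL (β : ℝ → ℝ → ℝ) : Prop :=
  (∀ t, 0 ≤ t → ContinuousOn (fun s => β s t) (Set.Ici 0) ∧
      StrictMonoOn (fun s => β s t) (Set.Ici 0) ∧ β 0 t = 0) ∧
  (∀ s, 0 ≤ s → AntitoneOn (fun t => β s t) (Set.Ici 0) ∧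
      Filter.Tendsto (fun t => β s t) Filter.atTop (nhds 0))

/-- `‖v_[a,b]‖ = sup_{a ≤ τ ≤ b} ‖v τ‖`. -/
noncomputable def supNorm {E : Type*} [NormedAddCommGroup E] (v : ℝ → E) (a b : ℝ) : ℝ :=
  sSup ((fun τ => ‖v τ‖) '' Set.Icc a b)

/-- The next triggering time (in `EReal`, so that `sInf ∅ = ⊤`). -/
noncomputable def triggerTime {E : Type*} [NormedAddCommGroup E]
    (γb : ℝ → ℝ) (r : ℝ → E) (tk : ℝ) : EReal :=
  sInf (((↑) : ℝ → EReal) ''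
    {t : ℝ | tk < t ∧ (t - tk) * γb (supNorm r tk t) = supNorm r tk t ∧ supNorm r tk t ≠ 0})

open Topology

section supNorm

variable {E : Type*} [NormedAddCommGroup E] {v : ℝ → E} {a b c s : ℝ}

lemma supNorm_nonneg (v : ℝ → E) (a b : ℝ) : 0 ≤ supNorm v a b :=
  Real.sSup_nonneg (by rintro _ ⟨s, _, rfl⟩; exact norm_nonneg _)

lemma supNorm_le (hab : a ≤ b) (h : ∀ s ∈ Icc a b, ‖v s‖ ≤ c) : supNorm v a b ≤ c :=
  csSup_le ((nonempty_Icc.2 hab).image _) (by rintro _ ⟨s, hs, rfl⟩; exact h s hs)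

lemma norm_le_supNorm (h : ∀ s ∈ Icc a b, ‖v s‖ ≤ c) (hs : s ∈ Icc a b) :
    ‖v s‖ ≤ supNorm v a b :=
  le_csSup ⟨c, by rintro _ ⟨u, hu, rfl⟩; exact h u hu⟩ ⟨s, hs, rfl⟩

lemma ContinuousOn.norm_le_supNorm (hv : ContinuousOn v (Icc a b)) (hs : s ∈ Icc a b) :
    ‖v s‖ ≤ supNorm v a b :=
  have ⟨_, hc⟩ := isCompact_Icc.exists_bound_of_continuousOn hv
  _root_.norm_le_supNorm hc hs

end supNorm

namespace IsClassKInf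

variable {γ : ℝ → ℝ} {s u v y : ℝ}

lemma monotoneOn (hγ : IsClassKInf γ) : MonotoneOn γ (Ici 0) :=
  hγ.2.1.monotoneOn

lemma pos (hγ : IsClassKInf γ) (hs : 0 < s) : 0 < γ s :=
  hγ.2.2.1 ▸ hγ.2.1 self_mem_Ici hs.le hs

lemma le_of_apply_le (hγ : IsClassKInf γ) (hu : 0 ≤ u) (hv : 0 ≤ v) (h : γ u ≤ γ v) : u ≤ v :=
  (hγ.2.1.le_iff_le hu hv).1 h

lemma exists_eq (hγ : IsClassKInf γ) (hy : 0 ≤ y) : ∃ z, 0 ≤ z ∧ γ z = y := by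
  obtain ⟨b, hb0, hyb⟩ : ∃ b, 0 ≤ b ∧ y ≤ γ b :=
    ((hγ.2.2.2.eventually_ge_atTop y).and (eventually_ge_atTop 0)).exists.imp fun _ h => h.symm
  obtain ⟨z, hz, rfl⟩ := intermediate_value_Icc hb0 (hγ.1.mono Icc_subset_Ici_self)
    ⟨by rwa [hγ.2.2.1], hyb⟩
  exact ⟨z, hz.1, rfl⟩

end IsClassKInf

namespace IsClassKL

variable {β : ℝ → ℝ → ℝ} {a d : ℝ}

lemma nonneg (hβ : IsClassKL β) (ha : 0 ≤ a) (hd : 0 ≤ d) : 0 ≤ β a d :=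
  (hβ.1 d hd).2.2 ▸ (hβ.1 d hd).2.1.monotoneOn self_mem_Ici ha ha

lemma le_apply_zero (hβ : IsClassKL β) (ha : 0 ≤ a) (hd : 0 ≤ d) : β a d ≤ β a 0 :=
  (hβ.2 a ha).1 self_mem_Ici hd hd

lemma tendsto_sub (hβ : IsClassKL β) (ha : 0 ≤ a) (T : ℝ) :
    Tendsto (fun s => β a (s - T)) atTop (𝓝 0) :=
  (hβ.2 a ha).2.comp (tendsto_atTop_add_const_right _ (-T) tendsto_id)

end IsClassKL

lemma le_of_le_max_div {A c ε : ℝ} (hε : 1 < ε) (hc : 0 ≤ c) (h : A ≤ max c (A / ε)) :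
    A ≤ c := by
  rcases le_max_iff.mp h with h | h
  · exact h
  · have : A * ε ≤ A := (le_div_iff₀ (by linarith)).mp h
    nlinarith

lemma tendsto_atTop_of_le_sub {t : ℕ → ℝ} {δ : ℝ} (hδ : 0 < δ) (h : ∀ k, δ ≤ t (k + 1) - t k) :
    Tendsto t atTop atTop := by
  have hlin : ∀ k : ℕ, t 0 + k * δ ≤ t k := by
    intro k
    induction k with
    | zero => simp
    | succ k ih => push_cast; linarith [h k]
  exact tendsto_atTop_mono hlin
    (tendsto_atTop_add_const_left _ _ (tendsto_natCast_atTop_atTop.atTop_mul_const hδ))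

lemma Monotone.exists_mem_Ioc_succ {α : Type*} [LinearOrder α] {t : ℕ → α} (ht : Monotone t)
    {j K : ℕ} {τ : α} (hτ : τ ∈ Ioc (t j) (t K)) : ∃ i ∈ Ico j K, τ ∈ Ioc (t i) (t (i + 1)) := by
  rw [← ht.biUnion_Ico_Ioc_map_succ] at hτ
  obtain ⟨i, hi, hτi⟩ := mem_iUnion₂.1 hτ
  exact ⟨i, hi, by rwa [← Order.succ_eq_add_one]⟩

/-- The continuous extension of `g s / s` by `C` at `0` attains a positive minimum and a maximum
on `[0, R]`. -/
lemma exists_bounds_div_self {g : ℝ → ℝ} (hcont : ContinuousOn g (Ioi 0))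
    (hpos : ∀ s, 0 < s → 0 < g s) {C : ℝ} (hC : 0 < C)
    (hlim : Tendsto (fun s => g s / s) (𝓝[>] 0) (𝓝 C)) {R : ℝ} (hR : 0 ≤ R) :
    ∃ m M : ℝ, 0 < m ∧ 0 < M ∧ ∀ s ∈ Ioc 0 R, m ≤ g s / s ∧ g s / s ≤ M := by
  set f := Function.update (fun s => g s / s) 0 C
  have hf_pos : ∀ s ∈ Icc 0 R, 0 < f s := by
    intro s hs
    rcases hs.1.eq_or_lt with rfl | hs0
    · simpa [f] using hC
    · simpa [f, Function.update_of_ne hs0.ne'] using div_pos (hpos s hs0) hs0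
  have hf_cont : ContinuousOn f (Icc 0 R) := by
    intro s hs
    rcases hs.1.eq_or_lt with rfl | hs0
    · exact continuousWithinAt_update_same.2
        (hlim.mono_left (nhdsWithin_mono _ fun y hy => lt_of_le_of_ne hy.1.1 (Ne.symm hy.2)))
    · have hat : ContinuousAt (fun s => g s / s) s :=
        ((hcont.continuousAt (Ioi_mem_nhds hs0)).div continuousAt_id hs0.ne')
      refine hat.continuousWithinAt.congr_of_eventuallyEq ?_ (Function.update_of_ne hs0.ne' _ _)
      filter_upwards [nhdsWithin_le_nhds (Ioi_mem_nhds hs0)] with y hy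
      exact Function.update_of_ne (ne_of_gt hy) _ _
  obtain ⟨s₁, hs₁, hmin⟩ := isCompact_Icc.exists_isMinOn (nonempty_Icc.2 hR) hf_cont
  obtain ⟨s₂, hs₂, hmax⟩ := isCompact_Icc.exists_isMaxOn (nonempty_Icc.2 hR) hf_cont
  refine ⟨f s₁, f s₂, hf_pos s₁ hs₁, hf_pos s₂ hs₂, fun s hs => ?_⟩
  have hfs : f s = g s / s := Function.update_of_ne hs.1.ne' _ _
  exact hfs ▸ ⟨hmin (Ioc_subset_Icc_self hs), hmax (Ioc_subset_Icc_self hs)⟩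

lemma exists_mem_Ico_trigger {E : Type*} [NormedAddCommGroup E] {γb : ℝ → ℝ} {r : ℝ → E}
    {tk T : ℝ} (hT : (T : EReal) = triggerTime γb r tk) {η : ℝ} (hη : 0 < η) :
    ∃ u ∈ Ico T (T + η), tk < u ∧ (u - tk) * γb (supNorm r tk u) = supNorm r tk u ∧
      supNorm r tk u ≠ 0 := by
  have hlt : triggerTime γb r tk < ((T + η : ℝ) : EReal) := by
    rw [← hT]
    exact_mod_cast lt_add_of_pos_right T hη
  obtain ⟨_, ⟨u, hu, rfl⟩, hu_lt⟩ := sInf_lt_iff.mp hlt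
  have hTu : (T : EReal) ≤ u := hT ▸ sInf_le ⟨u, hu, rfl⟩
  exact ⟨u, ⟨by exact_mod_cast hTu, by exact_mod_cast hu_lt⟩, hu⟩

/-- A tail bound `c` improves to `c / ε` on a later tail, so iterating gives tail bounds
`c₀ / ε ^ n`. -/
theorem tendsto_zero_of_tail_gain {E : Type*} [NormedAddCommGroup E] {v : ℝ → E} {T : ℕ → ℝ}
    {b : ℕ → ℝ → ℝ} {ε B : ℝ} (hε : 1 < ε) (hT : ∀ S, ∃ j, S ≤ T j)
    (hB : ∀ s ≥ T 0, ‖v s‖ ≤ B) (hb : ∀ j, Tendsto (b j) atTop (𝓝 0))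
    (hgain : ∀ j c, (∀ s ≥ T j, ‖v s‖ ≤ c) → ∀ s ≥ T j, ‖v s‖ ≤ max (b j s) (c / ε)) :
    Tendsto v atTop (𝓝 0) := by
  have hε0 : 0 < ε := by linarith
  have hstep : ∀ j c, 0 < c → (∀ s ≥ T j, ‖v s‖ ≤ c) → ∃ j', ∀ s ≥ T j', ‖v s‖ ≤ c / ε := by
    intro j c hc hj
    obtain ⟨S, hS⟩ := eventually_atTop.mp ((hb j).eventually (ge_mem_nhds (div_pos hc hε0)))
    obtain ⟨j', hj'⟩ := hT (max S (T j))
    refine ⟨j', fun s hs => (hgain j c hj s ?_).trans (max_le (hS s ?_) le_rfl)⟩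
    · exact (le_max_right _ _).trans (hj'.trans hs)
    · exact (le_max_left _ _).trans (hj'.trans hs)
  set c₀ := max B 1
  have hc₀ : 0 < c₀ := lt_max_of_lt_right one_pos
  have htail : ∀ n : ℕ, ∃ j, ∀ s ≥ T j, ‖v s‖ ≤ c₀ / ε ^ n := by
    intro n
    induction n with
    | zero => exact ⟨0, fun s hs => by
      rw [pow_zero, div_one]; exact (hB s hs).trans (le_max_left _ _)⟩
    | succ n ih =>
      obtain ⟨j, hj⟩ := ih
      rw [pow_succ, ← div_div]
      exact hstep j _ (by positivity) hj
  refine Metric.tendsto_atTop.2 fun η hη => ?_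
  obtain ⟨n, hn⟩ := exists_pow_lt_of_lt_one (div_pos hη hc₀) (inv_lt_one_of_one_lt₀ hε)
  obtain ⟨j, hj⟩ := htail n
  refine ⟨T j, fun s hs => ?_⟩
  rw [dist_zero_right]
  calc ‖v s‖ ≤ c₀ / ε ^ n := hj s hs
    _ = c₀ * ε⁻¹ ^ n := by rw [inv_pow, div_eq_mul_inv]
    _ < η := by rwa [lt_div_iff₀' hc₀] at hn

theorem tendsto_zero_of_iss {E F : Type*} [NormedAddCommGroup E] [NormedAddCommGroup F]
    {x : ℝ → E} {u : ℝ → F} {β : ℝ → ℝ → ℝ} {γ : ℝ → ℝ} {t0 : ℝ}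
    (hβ : IsClassKL β) (hγ : IsClassKInf γ)
    (hISS : ∀ t0' t', t0 ≤ t0' → t0' ≤ t' →
      ‖x t'‖ ≤ max (β ‖x t0'‖ (t' - t0')) (γ (supNorm u t0' t')))
    (hu : Tendsto u atTop (𝓝 0)) : Tendsto x atTop (𝓝 0) := by
  refine Metric.tendsto_atTop.2 fun η hη => ?_
  obtain ⟨a, ha0, ha⟩ := hγ.exists_eq (half_pos hη).le
  have ha_pos : 0 < a := ha0.lt_of_ne (by rintro rfl; linarith [hγ.2.2.1])
  obtain ⟨S, hS⟩ := Metric.tendsto_atTop.1 hu a ha_pos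
  set t₁ := max S t0
  obtain ⟨S', hS'⟩ := eventually_atTop.1
    ((hβ.tendsto_sub (norm_nonneg (x t₁)) t₁).eventually (gt_mem_nhds hη))
  refine ⟨max S' t₁, fun s hs => ?_⟩
  have hs₁ : t₁ ≤ s := le_of_max_le_right hs
  have hsup : supNorm u t₁ s ≤ a := supNorm_le hs₁ fun τ hτ => by
    simpa using (hS τ ((le_max_left _ _).trans hτ.1)).le
  rw [dist_zero_right]
  refine (hISS t₁ s (le_max_right _ _) hs₁).trans_lt (max_lt (hS' s (le_of_max_le_left hs)) ?_)
  calc γ (supNorm u t₁ s) ≤ γ a := hγ.monotoneOn (supNorm_nonneg _ _ _) ha0 hsup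
    _ < η := by rw [ha]; exact half_lt_self hη

structure IsEventTriggered {E : Type*} [NormedAddCommGroup E] [NormedSpace ℝ E]
    (t : ℕ → ℝ) (ξ r : ℝ → E) (γb : ℝ → ℝ) : Prop where
  strictMono : StrictMono t
  continuousOn : ContinuousOn ξ (Ici (t 0))
  eq_integral : ∀ k, ∀ s ∈ Ico (t k) (t (k + 1)), r s = ∫ τ in t k..s, ξ τ
  trigger : ∀ k, ((t (k + 1) : ℝ) : EReal) = triggerTime γb r (t k)

namespace IsEventTriggered

variable {E : Type*} [NormedAddCommGroup E] [NormedSpace ℝ E]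
  {t : ℕ → ℝ} {ξ r : ℝ → E} {γb : ℝ → ℝ} {c : ℝ} {k : ℕ}

lemma apply_eq_zero (h : IsEventTriggered t ξ r γb) (k : ℕ) : r (t k) = 0 := by
  rw [h.eq_integral k (t k) ⟨le_rfl, h.strictMono k.lt_succ_self⟩, intervalIntegral.integral_same]

lemma continuousOn_Icc (h : IsEventTriggered t ξ r γb) (i : ℕ) (b : ℝ) :
    ContinuousOn ξ (Icc (t i) b) :=
  h.continuousOn.mono (Icc_subset_Ici_self.trans
    (Ici_subset_Ici.2 (h.strictMono.monotone (Nat.zero_le i))))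

lemma norm_le_mul (h : IsEventTriggered t ξ r γb)
    (hc : ∀ s ∈ Icc (t k) (t (k + 1)), ‖ξ s‖ ≤ c) {s : ℝ} (hs : s ∈ Icc (t k) (t (k + 1))) :
    ‖r s‖ ≤ (s - t k) * c := by
  rcases hs.2.lt_or_eq with hlt | rfl
  · have hbound : ∀ τ ∈ uIoc (t k) s, ‖ξ τ‖ ≤ c := fun τ hτ => by
      rw [uIoc_of_le hs.1] at hτ
      exact hc τ ⟨hτ.1.le, hτ.2.trans hs.2⟩
    have := intervalIntegral.norm_integral_le_of_norm_le_const hbound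
    rwa [← h.eq_integral k s ⟨hs.1, hlt⟩, abs_of_nonneg (sub_nonneg.2 hs.1), mul_comm] at this
  · have hc0 : 0 ≤ c := (norm_nonneg _).trans (hc _ hs)
    rw [h.apply_eq_zero, norm_zero]
    exact mul_nonneg (sub_nonneg.2 hs.1) hc0

lemma norm_le_max_of_mem_Icc (h : IsEventTriggered t ξ r γb) {c₁ c₂ u : ℝ}
    (hc₁ : ∀ s ∈ Icc (t k) (t (k + 1)), ‖ξ s‖ ≤ c₁)
    (hc₂ : ∀ s ∈ Icc (t (k + 1)) (t (k + 2)), ‖ξ s‖ ≤ c₂) (hu : u ∈ Icc (t (k + 1)) (t (k + 2)))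
    {σ : ℝ} (hσ : σ ∈ Icc (t k) u) :
    ‖r σ‖ ≤ max ((u - t k) * c₁) ((u - t (k + 1)) * c₂) := by
  rcases le_or_gt σ (t (k + 1)) with hσk | hσk
  · have hc₁0 : 0 ≤ c₁ := (norm_nonneg _).trans (hc₁ σ ⟨hσ.1, hσk⟩)
    refine (h.norm_le_mul hc₁ ⟨hσ.1, hσk⟩).trans (le_max_of_le_left ?_)
    exact mul_le_mul_of_nonneg_right (by linarith [hσ.2]) hc₁0
  · have hσ' : σ ∈ Icc (t (k + 1)) (t (k + 1 + 1)) := ⟨hσk.le, hσ.2.trans hu.2⟩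
    have hc₂0 : 0 ≤ c₂ := (norm_nonneg _).trans (hc₂ σ hσ')
    refine (h.norm_le_mul hc₂ hσ').trans (le_max_of_le_right ?_)
    exact mul_le_mul_of_nonneg_right (by linarith [hσ.2]) hc₂0

/-- If `γb ‖r τ‖ > c`, then at trigger points `u` close enough after `t (k + 1)` the ratio
`supNorm r (t k) u / (u - t k)` is still below `γb ‖r τ‖`, since `‖r‖` grows with slope at most `c`
on the period; but the triggering law makes this ratio `γb (supNorm r (t k) u) ≥ γb ‖r τ‖`. -/
lemma gain_apply_norm_le (h : IsEventTriggered t ξ r γb) (hγb : IsClassKInf γb)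
    (hc : ∀ s ∈ Icc (t k) (t (k + 1)), ‖ξ s‖ ≤ c) {τ : ℝ} (hτ : τ ∈ Icc (t k) (t (k + 1))) :
    γb ‖r τ‖ ≤ c := by
  by_contra! hlt
  set g := γb ‖r τ‖
  have hc0 : 0 ≤ c := (norm_nonneg _).trans (hc τ hτ)
  set c₂ := supNorm ξ (t (k + 1)) (t (k + 2))
  have hc₂ : ∀ s ∈ Icc (t (k + 1)) (t (k + 2)), ‖ξ s‖ ≤ c₂ :=
    fun s hs => (h.continuousOn_Icc _ _).norm_le_supNorm hs
  have hc₂0 : 0 ≤ c₂ := supNorm_nonneg _ _ _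
  have hd : 0 < t (k + 1) - t k := sub_pos.2 (h.strictMono k.lt_succ_self)
  set η := min (t (k + 2) - t (k + 1)) ((t (k + 1) - t k) * g / (c₂ + 1))
  have hη : 0 < η :=
    lt_min (sub_pos.2 (h.strictMono (k + 1).lt_succ_self)) (by have := hc0.trans_lt hlt; positivity)
  obtain ⟨u, hu, -, hu_eq, -⟩ := exists_mem_Ico_trigger (h.trigger k) hη
  have hηk : η ≤ t (k + 2) - t (k + 1) := min_le_left _ _
  have hu' : u ∈ Icc (t (k + 1)) (t (k + 2)) := ⟨hu.1, by linarith [hu.2]⟩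
  have huk : 0 < u - t k := by linarith [hu.1]
  set L := max ((u - t k) * c) ((u - t (k + 1)) * c₂)
  have hL : L < (u - t k) * g := by
    refine max_lt (mul_lt_mul_of_pos_left hlt huk) ?_
    have hη' : η * (c₂ + 1) ≤ (t (k + 1) - t k) * g :=
      (le_div_iff₀ (by positivity)).1 (min_le_right _ _)
    nlinarith [hu.1, hu.2]
  have hr_le : ∀ σ ∈ Icc (t k) u, ‖r σ‖ ≤ L := fun σ hσ => h.norm_le_max_of_mem_Icc hc hc₂ hu' hσ
  have hτN : ‖r τ‖ ≤ supNorm r (t k) u := norm_le_supNorm hr_le ⟨hτ.1, hτ.2.trans hu.1⟩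
  have hgN : g ≤ γb (supNorm r (t k) u) :=
    hγb.monotoneOn (norm_nonneg _) (supNorm_nonneg _ _ _) hτN
  have hN : supNorm r (t k) u ≤ L := supNorm_le (by linarith) hr_le
  nlinarith [mul_le_mul_of_nonneg_left hgN huk.le]

lemma norm_le_of_le_gain (h : IsEventTriggered t ξ r γb) (hγb : IsClassKInf γb) {j K : ℕ}
    {ρ : ℝ} (hρ : 0 ≤ ρ) (hcρ : c ≤ γb ρ) (hc : ∀ s ∈ Icc (t j) (t K), ‖ξ s‖ ≤ c) {τ : ℝ}
    (hτ : τ ∈ Icc (t j) (t K)) : ‖r τ‖ ≤ ρ := by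
  rcases hτ.1.eq_or_lt with rfl | hjτ
  · rwa [h.apply_eq_zero, norm_zero]
  obtain ⟨i, hi, hτi⟩ := h.strictMono.monotone.exists_mem_Ioc_succ ⟨hjτ, hτ.2⟩
  have hsub : Icc (t i) (t (i + 1)) ⊆ Icc (t j) (t K) :=
    Icc_subset_Icc (h.strictMono.monotone hi.1) (h.strictMono.monotone hi.2)
  exact hγb.le_of_apply_le (norm_nonneg _) hρ
    ((h.gain_apply_norm_le hγb (fun s hs => hc s (hsub hs)) (Ioc_subset_Icc_self hτi)).trans hcρ)

section Gain

variable {F : Type*} [NormedAddCommGroup F] {x : ℝ → F} {β : ℝ → ℝ → ℝ} {γ : ℝ → ℝ} {ε : ℝ}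

lemma norm_le_max_gain (h : IsEventTriggered t ξ r γb) (hγb : IsClassKInf γb)
    (hγ : IsClassKInf γ) (hε : 0 < ε) (hγbγ : ∀ s, 0 ≤ s → ε * γ s ≤ γb s)
    (hIOS : ∀ t0' t', t 0 ≤ t0' → t0' ≤ t' →
      ‖ξ t'‖ ≤ max (β ‖x t0'‖ (t' - t0')) (γ (supNorm r t0' t')))
    {j K : ℕ} (hc0 : 0 ≤ c) (hc : ∀ s ∈ Icc (t j) (t K), ‖ξ s‖ ≤ c) {s : ℝ}
    (hs : s ∈ Icc (t j) (t K)) : ‖ξ s‖ ≤ max (β ‖x (t j)‖ (s - t j)) (c / ε) := by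
  obtain ⟨ρ, hρ, hρc⟩ := hγb.exists_eq hc0
  have hsup : supNorm r (t j) s ≤ ρ := supNorm_le hs.1 fun τ hτ =>
    h.norm_le_of_le_gain hγb hρ hρc.ge hc ⟨hτ.1, hτ.2.trans hs.2⟩
  have hγρ : γ (supNorm r (t j) s) ≤ c / ε := by
    rw [le_div_iff₀' hε, ← hρc]
    exact (mul_le_mul_of_nonneg_left (hγ.monotoneOn (supNorm_nonneg _ _ _) hρ hsup) hε.le).trans
      (hγbγ ρ hρ)
  exact (hIOS (t j) s (h.strictMono.monotone (Nat.zero_le j)) hs.1).trans (max_le_max le_rfl hγρ)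

lemma norm_le_initial_bound (h : IsEventTriggered t ξ r γb) (hγb : IsClassKInf γb)
    (hβ : IsClassKL β) (hγ : IsClassKInf γ) (hε : 1 < ε) (hγbγ : ∀ s, 0 ≤ s → ε * γ s ≤ γb s)
    (hIOS : ∀ t0' t', t 0 ≤ t0' → t0' ≤ t' →
      ‖ξ t'‖ ≤ max (β ‖x t0'‖ (t' - t0')) (γ (supNorm r t0' t')))
    (K : ℕ) {s : ℝ} (hs : s ∈ Icc (t 0) (t K)) : ‖ξ s‖ ≤ β ‖x (t 0)‖ 0 := by
  set Ξ := supNorm ξ (t 0) (t K)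
  have hΞ : ∀ s ∈ Icc (t 0) (t K), ‖ξ s‖ ≤ Ξ :=
    fun s hs => (h.continuousOn_Icc 0 _).norm_le_supNorm hs
  have hB : 0 ≤ β ‖x (t 0)‖ 0 := hβ.nonneg (norm_nonneg _) le_rfl
  refine (hΞ s hs).trans (le_of_le_max_div hε hB (supNorm_le (hs.1.trans hs.2) fun σ hσ => ?_))
  refine (h.norm_le_max_gain hγb hγ (by linarith) hγbγ hIOS (supNorm_nonneg _ _ _) hΞ hσ).trans
    (max_le_max ?_ le_rfl)
  exact hβ.le_apply_zero (norm_nonneg _) (sub_nonneg.2 hσ.1)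

lemma tendsto_zero_of_ios (h : IsEventTriggered t ξ r γb) (hγb : IsClassKInf γb)
    (hβ : IsClassKL β) (hγ : IsClassKInf γ) (hε : 1 < ε) (hγbγ : ∀ s, 0 ≤ s → ε * γ s ≤ γb s)
    (hIOS : ∀ t0' t', t 0 ≤ t0' → t0' ≤ t' →
      ‖ξ t'‖ ≤ max (β ‖x t0'‖ (t' - t0')) (γ (supNorm r t0' t')))
    (ht : Tendsto t atTop atTop) : Tendsto ξ atTop (𝓝 0) := by
  have hT : ∀ S, ∃ K, S ≤ t K := fun S => (ht.eventually_ge_atTop S).exists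
  refine tendsto_zero_of_tail_gain (b := fun j s => β ‖x (t j)‖ (s - t j)) (B := β ‖x (t 0)‖ 0)
    hε hT ?_ (fun j => hβ.tendsto_sub (norm_nonneg _) _) ?_
  · intro s hs
    obtain ⟨K, hK⟩ := hT s
    exact h.norm_le_initial_bound hγb hβ hγ hε hγbγ hIOS K ⟨hs, hK⟩
  · intro j c hc s hs
    obtain ⟨K, hK⟩ := hT s
    exact h.norm_le_max_gain hγb hγ (by linarith) hγbγ hIOS ((norm_nonneg _).trans (hc _ le_rfl))
      (fun σ hσ => hc σ hσ.1) ⟨hs, hK⟩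

end Gain

/-- Up to an arbitrarily small excess, each sampling period equals `N / γb N` for the level
`0 < N ≤ R` at which the triggering law fires. -/
lemma exists_dwell_bounds (h : IsEventTriggered t ξ r γb) (hγb : IsClassKInf γb) {C R : ℝ}
    (hC : 0 < C) (hlim : Tendsto (fun s => γb s / s) (𝓝[>] 0) (𝓝 C)) (hR0 : 0 ≤ R)
    (hR : ∀ K, ∀ s ∈ Icc (t 0) (t K), ‖r s‖ ≤ R) :
    ∃ δ Δ : ℝ, 0 < δ ∧ ∀ k, δ ≤ t (k + 1) - t k ∧ t (k + 1) - t k ≤ Δ := by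
  obtain ⟨m, M, hm, hM, hmM⟩ := exists_bounds_div_self (hγb.1.mono Ioi_subset_Ici_self)
    (fun s hs => hγb.pos hs) hC hlim hR0
  have hnear : ∀ k η, 0 < η → η ≤ t (k + 2) - t (k + 1) →
      ∃ u ∈ Ico (t (k + 1)) (t (k + 1) + η), 1 / M ≤ u - t k ∧ u - t k ≤ 1 / m := by
    intro k η hη hηk
    obtain ⟨u, hu, htu, hu_eq, hN0⟩ := exists_mem_Ico_trigger (h.trigger k) hη
    set N := supNorm r (t k) u
    have hN : N ∈ Ioc 0 R := ⟨(supNorm_nonneg _ _ _).lt_of_ne' hN0, supNorm_le htu.le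
      fun σ hσ => hR (k + 2) σ
        ⟨(h.strictMono.monotone (Nat.zero_le k)).trans hσ.1, by linarith [hσ.2, hu.2]⟩⟩
    have hpos : 0 < u - t k := sub_pos.2 htu
    have hratio : γb N / N = 1 / (u - t k) := by
      rw [div_eq_div_iff hN0 hpos.ne']
      linarith
    obtain ⟨hmN, hNM⟩ := hratio ▸ hmM N hN
    exact ⟨u, hu, (one_div_le hpos hM).1 hNM, (le_one_div hm hpos).1 hmN⟩
  have hgap : ∀ k, 0 < t (k + 2) - t (k + 1) :=
    fun k => sub_pos.2 (h.strictMono (k + 1).lt_succ_self)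
  refine ⟨1 / M, 1 / m, by positivity, fun k => ⟨?_, ?_⟩⟩
  · refine le_of_forall_pos_lt_add fun η hη => ?_
    obtain ⟨u, hu, hMu, -⟩ := hnear k (min η _) (lt_min hη (hgap k)) (min_le_right _ _)
    linarith [hu.2, min_le_left η (t (k + 2) - t (k + 1))]
  · obtain ⟨u, hu, -, hum⟩ := hnear k _ (hgap k) le_rfl
    linarith [hu.1]

lemma tendsto_zero_of_integrand (h : IsEventTriggered t ξ r γb) {Δ : ℝ}
    (hΔ : ∀ k, t (k + 1) - t k ≤ Δ) (ht : Tendsto t atTop atTop)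
    (hξ : Tendsto ξ atTop (𝓝 0)) : Tendsto r atTop (𝓝 0) := by
  refine Metric.tendsto_atTop.2 fun η hη => ?_
  have hΔ0 : 0 < Δ := (sub_pos.2 (h.strictMono (Nat.lt_succ_self 0))).trans_le (hΔ 0)
  obtain ⟨S, hS⟩ := Metric.tendsto_atTop.1 hξ (η / 2 / Δ) (by positivity)
  obtain ⟨j, hj⟩ := (ht.eventually_ge_atTop S).exists
  refine ⟨t j, fun s hs => ?_⟩
  rw [dist_zero_right]
  rcases hs.eq_or_lt with rfl | hjs
  · rw [h.apply_eq_zero, norm_zero]; exact hη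
  obtain ⟨K, hK⟩ := (ht.eventually_ge_atTop s).exists
  obtain ⟨i, hi, hsi⟩ := h.strictMono.monotone.exists_mem_Ioc_succ ⟨hjs, hK⟩
  have hc : ∀ σ ∈ Icc (t i) (t (i + 1)), ‖ξ σ‖ ≤ η / 2 / Δ := fun σ hσ => by
    simpa using (hS σ (hj.trans ((h.strictMono.monotone hi.1).trans hσ.1))).le
  calc ‖r s‖ ≤ (s - t i) * (η / 2 / Δ) := h.norm_le_mul hc (Ioc_subset_Icc_self hsi)
    _ ≤ Δ * (η / 2 / Δ) := mul_le_mul_of_nonneg_right (by linarith [hsi.2, hΔ i]) (by positivity)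
    _ < η := by rw [mul_div_cancel₀ _ hΔ0.ne']; exact half_lt_self hη

end IsEventTriggered

theorem event_triggered_stabilization_general {n m : ℕ} (t0 : ℝ)
    (x : ℝ → EuclideanSpace ℝ (Fin n)) (ξ r : ℝ → EuclideanSpace ℝ (Fin m))
    (hξcont : ContinuousOn ξ (Set.Ici t0))
    (t : ℕ → ℝ) (ht0 : t 0 = t0) (hmono : StrictMono t)
    (γb : ℝ → ℝ) (hγb : IsClassKInf γb)
    -- the auxiliary input is the integral of the auxiliary output over the sampling period
    (hr : ∀ k : ℕ, ∀ s ∈ Set.Ico (t k) (t (k + 1)), r s = ∫ τ in (t k)..s, ξ τ)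
    -- each `t (k+1)` is generated by the triggering law
    (htrig : ∀ k : ℕ, ((t (k + 1) : ℝ) : EReal) = triggerTime γb r (t k))
    -- (i) ISS and IOS estimates from every intermediate initial time
    (βt β : ℝ → ℝ → ℝ) (γt γ : ℝ → ℝ)
    (hβt : IsClassKL βt) (hβ : IsClassKL β) (hγt : IsClassKInf γt) (hγ : IsClassKInf γ)
    (hISS : ∀ t0' t', t0 ≤ t0' → t0' ≤ t' →
      ‖x t'‖ ≤ max (βt ‖x t0'‖ (t' - t0')) (γt (supNorm r t0' t')))
    (hIOS : ∀ t0' t', t0 ≤ t0' → t0' ≤ t' →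
      ‖ξ t'‖ ≤ max (β ‖x t0'‖ (t' - t0')) (γ (supNorm r t0' t')))
    -- (iii) γ̄ ≥ ε·γ on (0,∞) for some ε > 1, and lim_{s→0⁺} γ̄(s)/s exists, positive, finite
    (ε : ℝ) (hε : 1 < ε) (hγbγ : ∀ s > 0, ε * γ s ≤ γb s)
    (hlim : ∃ C : ℝ, 0 < C ∧
      Filter.Tendsto (fun s => γb s / s) (nhdsWithin 0 (Set.Ioi 0)) (nhds C)) :
    (0 < ⨅ k : ℕ, (t (k + 1) - t k)) ∧
      Filter.Tendsto x Filter.atTop (nhds 0) ∧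
      Filter.Tendsto ξ Filter.atTop (nhds 0) ∧
      Filter.Tendsto r Filter.atTop (nhds 0) := by
  subst ht0
  have h : IsEventTriggered t ξ r γb := ⟨hmono, hξcont, hr, htrig⟩
  have hgain : ∀ s, 0 ≤ s → ε * γ s ≤ γb s := fun s hs => by
    rcases hs.eq_or_lt with rfl | hs
    · rw [hγ.2.2.1, hγb.2.2.1, mul_zero]
    · exact hγbγ s hs
  obtain ⟨R, hR0, hRB⟩ := hγb.exists_eq (hβ.nonneg (norm_nonneg (x (t 0))) le_rfl)
  have hR : ∀ K, ∀ s ∈ Icc (t 0) (t K), ‖r s‖ ≤ R := fun K _ hs =>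
    h.norm_le_of_le_gain hγb hR0 hRB.ge
      (fun _ => h.norm_le_initial_bound hγb hβ hγ hε hgain hIOS K) hs
  obtain ⟨C, hC, hCt⟩ := hlim
  obtain ⟨δ, Δ, hδ, hdwell⟩ := h.exists_dwell_bounds hγb hC hCt hR0 hR
  have ht : Tendsto t atTop atTop := tendsto_atTop_of_le_sub hδ fun k => (hdwell k).1
  have hξ := h.tendsto_zero_of_ios hγb hβ hγ hε hgain hIOS ht
  have hrt := h.tendsto_zero_of_integrand (fun k => (hdwell k).2) ht hξ
  exact ⟨hδ.trans_le (le_ciInf fun k => (hdwell k).1), tendsto_zero_of_iss hβt hγt hISS hrt, hξ, hrt⟩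

/-- Theorem 1 of the paper: event-triggered stabilization via the input-delay method. -/
theorem event_triggered_stabilization {n m : ℕ} (t0 : ℝ)
    (x : ℝ → EuclideanSpace ℝ (Fin n)) (ξ r : ℝ → EuclideanSpace ℝ (Fin m))
    (hxcont : ContinuousOn x (Set.Ici t0)) (hξcont : ContinuousOn ξ (Set.Ici t0))
    (t : ℕ → ℝ) (ht0 : t 0 = t0) (hmono : StrictMono t)
    (γb : ℝ → ℝ) (hγb : IsClassKInf γb)
    -- the auxiliary input is the integral of the auxiliary output over the sampling period
    (hr : ∀ k : ℕ, ∀ s ∈ Set.Ico (t k) (t (k + 1)), r s = ∫ τ in (t k)..s, ξ τ)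
    -- each `t (k+1)` is generated by the triggering law
    (htrig : ∀ k : ℕ, ((t (k + 1) : ℝ) : EReal) = triggerTime γb r (t k))
    -- (i) ISS and IOS estimates from every intermediate initial time
    (βt β : ℝ → ℝ → ℝ) (γt γ : ℝ → ℝ)
    (hβt : IsClassKL βt) (hβ : IsClassKL β) (hγt : IsClassKInf γt) (hγ : IsClassKInf γ)
    (hISS : ∀ t0' t', t0 ≤ t0' → t0' ≤ t' →
      ‖x t'‖ ≤ max (βt ‖x t0'‖ (t' - t0')) (γt (supNorm r t0' t')))
    (hIOS : ∀ t0' t', t0 ≤ t0' → t0' ≤ t' →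
      ‖ξ t'‖ ≤ max (β ‖x t0'‖ (t' - t0')) (γ (supNorm r t0' t')))
    -- (ii) limsup_{s→0⁺} γ(s)/s < ∞
    (hlimsup : Filter.limsup (fun s => ((γ s / s : ℝ) : EReal))
      (nhdsWithin 0 (Set.Ioi 0)) < ⊤)
    -- (iii) γ̄ ≥ ε·γ on (0,∞) for some ε > 1, and lim_{s→0⁺} γ̄(s)/s exists, positive, finite
    (ε : ℝ) (hε : 1 < ε) (hγbγ : ∀ s > 0, ε * γ s ≤ γb s)
    (hlim : ∃ C : ℝ, 0 < C ∧
      Filter.Tendsto (fun s => γb s / s) (nhdsWithin 0 (Set.Ioi 0)) (nhds C)) :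
    (0 < ⨅ k : ℕ, (t (k + 1) - t k)) ∧
      Filter.Tendsto x Filter.atTop (nhds 0) ∧
      Filter.Tendsto ξ Filter.atTop (nhds 0) ∧
      Filter.Tendsto r Filter.atTop (nhds 0) :=
  event_triggered_stabilization_general t0 x ξ r hξcont t ht0 hmono γb hγb hr htrig βt β γt γ hβt hβ
    hγt hγ hISS hIOS ε hε hγbγ hlim
end

section
/- Let γ̄ be a class K∞ function such that lim_{s→0⁺} γ̄(s)/s exists and is positive and finite. Let t_k ∈ ℝ, let r : [t_k,∞) → ℝᵐ be continuous with r(t_k) = 0 and ‖r_[t_k,t]‖ > 0 for all t > t_k, and set r_∞ := sup_{t ≥ t_k} ‖r(t)‖ < ∞. Let T_max > 0 be such that γ̄(s)/s ≥ 1/T_max for all s ∈ (0, r_∞]. Then the triggering time t_{k+1} := inf{ t > t_k : (t − t_k)·γ̄(‖r_[t_k,t]‖) = ‖r_[t_k,t]‖ and ‖r_[t_k,t]‖ ≠ 0 } satisfies t_{k+1} ≤ t_k + T_max. -/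
open Filter Set

/-! The function `f t = (t - t_k) γ̄(‖r_[t_k,t]‖) - ‖r_[t_k,t]‖` is continuous on `[t_k, ∞)`, since
the running supremum of a continuous function is continuous. It is negative just after `t_k`,
because `γ̄(s)/s` has a finite limit as `s → 0⁺` while `t - t_k → 0`, and it is nonnegative at
`t_k + T_max` by the choice of `T_max`. The intermediate value theorem then yields a triggering
instant in `(t_k, t_k + T_max]`. -/

open Topology

theorem ContinuousOn.sSup_image_Icc {α : Type*} [ConditionallyCompleteLinearOrder α]
    [TopologicalSpace α] [OrderTopology α] {g : ℝ → α} {a : ℝ} (hg : ContinuousOn g (Ici a)) :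
    ContinuousOn (fun t => sSup (g '' Icc a t)) (Ici a) := by
  -- Extend `g` constantly to the left of `a` and reparametrize `[a, t]` by `[0, 1]`, so that
  -- `IsCompact.continuous_sSup` applies.
  have hG : Continuous fun s => g (max s a) :=
    hg.comp_continuous (continuous_id.max continuous_const) fun s => le_max_right s a
  have hF : Continuous fun t => sSup ((fun u : ℝ => g (max (a + u • (t - a)) a)) '' Icc 0 1) :=
    isCompact_Icc.continuous_sSup (hG.comp (by fun_prop))
  refine hF.continuousOn.congr fun t (ht : a ≤ t) => ?_
  dsimp only
  rw [← image_image (fun s => g (max s a)) (fun u : ℝ => a + u • (t - a)),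
    ← segment_eq_image', segment_eq_Icc ht]
  exact congrArg sSup (image_congr fun s hs => by rw [max_eq_left hs.1])

section supNorm

variable {E : Type*} [NormedAddCommGroup E] {v : ℝ → E} {a : ℝ}

theorem ContinuousOn.supNorm (hv : ContinuousOn v (Ici a)) :
    ContinuousOn (supNorm v a) (Ici a) :=
  hv.norm.sSup_image_Icc

theorem supNorm_self (v : ℝ → E) (a : ℝ) : supNorm v a a = ‖v a‖ := by
  simp [supNorm]

theorem supNorm_le_sSup_Ici (hbdd : BddAbove ((fun τ => ‖v τ‖) '' Ici a)) {t : ℝ} (ht : a ≤ t) :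
    supNorm v a t ≤ sSup ((fun τ => ‖v τ‖) '' Ici a) :=
  csSup_le_csSup hbdd ((nonempty_Icc.2 ht).image _) (image_mono Icc_subset_Ici_self)

theorem tendsto_supNorm_nhdsGT (hv : ContinuousOn v (Ici a)) (hva : v a = 0)
    (hpos : ∀ t, a < t → 0 < supNorm v a t) :
    Tendsto (supNorm v a) (𝓝[>] a) (𝓝[>] 0) := by
  refine tendsto_nhdsWithin_iff.2 ⟨?_, eventually_nhdsWithin_of_forall hpos⟩
  have := hv.supNorm a self_mem_Ici
  rw [ContinuousWithinAt, supNorm_self, hva, norm_zero] at this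
  exact this.mono_left (nhdsWithin_mono a Ioi_subset_Ici_self)

theorem triggerTime_le {γb : ℝ → ℝ} {tk t : ℝ} (ht : tk < t)
    (heq : (t - tk) * γb (supNorm v tk t) = supNorm v tk t) (hne : supNorm v tk t ≠ 0) :
    triggerTime γb v tk ≤ t :=
  sInf_le (mem_image_of_mem _ ⟨ht, heq, hne⟩)

end supNorm

theorem eventually_mul_lt_of_tendsto_div {γ M : ℝ → ℝ} {C a : ℝ}
    (hγ : Tendsto (fun s => γ s / s) (𝓝[>] 0) (𝓝 C)) (hM : Tendsto M (𝓝[>] a) (𝓝[>] 0)) :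
    ∀ᶠ t in 𝓝[>] a, (t - a) * γ (M t) < M t := by
  have hlin : Tendsto (fun t => t - a) (𝓝[>] a) (𝓝 0) :=
    tendsto_sub_nhds_zero_iff.2 (tendsto_nhdsWithin_of_tendsto_nhds tendsto_id)
  have hprod : Tendsto (fun t => (t - a) * (γ (M t) / M t)) (𝓝[>] a) (𝓝 0) := by
    simpa using hlin.mul (hγ.comp hM)
  filter_upwards [hprod.eventually_lt_const one_pos, hM.eventually self_mem_nhdsWithin]
    with t hlt (hMt : 0 < M t)
  calc (t - a) * γ (M t) = (t - a) * (γ (M t) / M t) * M t := by field_simp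
    _ < 1 * M t := by gcongr
    _ = M t := one_mul _

theorem trigger_time_upper_bound_general {m : ℕ} (γb : ℝ → ℝ) (hγb : IsClassKInf γb)
    (C : ℝ)
    (hlim : Filter.Tendsto (fun s => γb s / s) (nhdsWithin 0 (Set.Ioi 0)) (nhds C))
    (tk : ℝ) (r : ℝ → EuclideanSpace ℝ (Fin m))
    (hrcont : ContinuousOn r (Set.Ici tk)) (hr0 : r tk = 0)
    (hpos : ∀ t, tk < t → 0 < supNorm r tk t)
    (hbdd : BddAbove ((fun τ => ‖r τ‖) '' Set.Ici tk))
    (rinf : ℝ) (hrinf : rinf = sSup ((fun τ => ‖r τ‖) '' Set.Ici tk))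
    (Tmax : ℝ) (hTmax : 0 < Tmax)
    (hTbound : ∀ s, 0 < s → s ≤ rinf → 1 / Tmax ≤ γb s / s) :
    triggerTime γb r tk ≤ ((tk + Tmax : ℝ) : EReal) := by
  set M := supNorm r tk
  set b := tk + Tmax
  have htb : tk < b := lt_add_of_pos_right tk hTmax
  obtain ⟨a, hfa, hta, hab⟩ := ((eventually_mul_lt_of_tendsto_div hlim
    (tendsto_supNorm_nhdsGT hrcont hr0 hpos)).and (Ioc_mem_nhdsGT htb)).exists
  have hMb : 0 < M b := hpos b htb
  have hfb : M b ≤ (b - tk) * γb (M b) := by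
    have := hTbound (M b) hMb (hrinf ▸ supNorm_le_sSup_Ici hbdd htb.le)
    rw [div_le_div_iff₀ hTmax hMb, one_mul] at this
    simpa [b, mul_comm] using this
  have hsub : Icc a b ⊆ Ioi tk := fun t ht => hta.trans_le ht.1
  have hMcont : ContinuousOn M (Icc a b) := hrcont.supNorm.mono (hsub.trans Ioi_subset_Ici_self)
  obtain ⟨t, ht, heq⟩ := isPreconnected_Icc.intermediate_value₂ (left_mem_Icc.2 hab)
    (right_mem_Icc.2 hab)
    ((continuousOn_id.sub continuousOn_const).mul
      (hγb.1.comp hMcont fun t ht => (hpos t (hsub ht)).le)) hMcont hfa.le hfb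
  exact (triggerTime_le (hsub ht) heq (hpos t (hsub ht)).ne').trans
    (EReal.coe_le_coe_iff.2 ht.2)

/-- The upper bound (18) on the inter-sampling intervals in the proof of Theorem 1:
`T_max` is an upper bound of the sampling interval. -/
theorem trigger_time_upper_bound {m : ℕ} (γb : ℝ → ℝ) (hγb : IsClassKInf γb)
    (C : ℝ) (hC : 0 < C)
    (hlim : Filter.Tendsto (fun s => γb s / s) (nhdsWithin 0 (Set.Ioi 0)) (nhds C))
    (tk : ℝ) (r : ℝ → EuclideanSpace ℝ (Fin m))
    (hrcont : ContinuousOn r (Set.Ici tk)) (hr0 : r tk = 0)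
    (hpos : ∀ t, tk < t → 0 < supNorm r tk t)
    (hbdd : BddAbove ((fun τ => ‖r τ‖) '' Set.Ici tk))
    (rinf : ℝ) (hrinf : rinf = sSup ((fun τ => ‖r τ‖) '' Set.Ici tk))
    (Tmax : ℝ) (hTmax : 0 < Tmax)
    (hTbound : ∀ s, 0 < s → s ≤ rinf → 1 / Tmax ≤ γb s / s) :
    triggerTime γb r tk ≤ ((tk + Tmax : ℝ) : EReal) :=
  trigger_time_upper_bound_general γb hγb C hlim tk r hrcont hr0 hpos hbdd rinf hrinf Tmax hTmax
    hTbound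
end

section
/- Let T_max > 0, R ≥ 0, c ≥ 0, ε > 1, let β be a class KL function, and let ζ : (0,∞) → [0, R] be a function satisfying ζ(t) ≤ max{ β(c, t/4), (1/ε)·ζ(t/2), (1/ε)·ζ(t/4) } for all t ≥ 8·T_max. Then ζ(t) → 0 as t → ∞. -/
open Filter Set

/-! If `f ≤ a` eventually, the recursion gives `f ≤ max δ (q * a)` eventually, once `b ≤ δ`.
Starting from the a priori bound `R` and iterating, `f ≤ max δ (q ^ n * R)` eventually for every
`n`; as `q < 1`, this is `≤ δ` for large `n`, and `δ > 0` is arbitrary. -/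

open Topology

section ContractionRecursion

variable {α : Type*} {l : Filter α} {f b : α → ℝ} {g₁ g₂ : α → α} {q : ℝ}

theorem eventually_le_max_mul_of_contraction
    (hrec : ∀ᶠ t in l, f t ≤ max (b t) (max (q * f (g₁ t)) (q * f (g₂ t))))
    (hg₁ : Tendsto g₁ l l) (hg₂ : Tendsto g₂ l l) (hq : 0 ≤ q) {δ a : ℝ}
    (hb : ∀ᶠ t in l, b t ≤ δ) (ha : ∀ᶠ t in l, f t ≤ a) :
    ∀ᶠ t in l, f t ≤ max δ (q * a) := by
  filter_upwards [hrec, hb, hg₁.eventually ha, hg₂.eventually ha] with t hf hbt h₁ h₂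
  exact hf.trans (max_le_max hbt (max_le (by gcongr) (by gcongr)))

theorem eventually_le_max_pow_mul_of_contraction
    (hrec : ∀ᶠ t in l, f t ≤ max (b t) (max (q * f (g₁ t)) (q * f (g₂ t))))
    (hg₁ : Tendsto g₁ l l) (hg₂ : Tendsto g₂ l l) (hq : 0 ≤ q) (hq₁ : q ≤ 1) {δ R : ℝ}
    (hδ : 0 ≤ δ) (hb : ∀ᶠ t in l, b t ≤ δ) (hR : ∀ᶠ t in l, f t ≤ R) (n : ℕ) :
    ∀ᶠ t in l, f t ≤ max δ (q ^ n * R) := by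
  induction n with
  | zero => simpa only [pow_zero, one_mul] using hR.mono fun t ht => le_max_of_le_right ht
  | succ n ih =>
    filter_upwards [eventually_le_max_mul_of_contraction hrec hg₁ hg₂ hq hb ih] with t ht
    refine ht.trans (max_le (le_max_left _ _) ?_)
    rw [mul_max_of_nonneg _ _ hq, pow_succ', mul_assoc]
    exact max_le_max (mul_le_of_le_one_left hδ hq₁) le_rfl

theorem tendsto_zero_of_contraction
    (hrec : ∀ᶠ t in l, f t ≤ max (b t) (max (q * f (g₁ t)) (q * f (g₂ t))))
    (hg₁ : Tendsto g₁ l l) (hg₂ : Tendsto g₂ l l) (hq : 0 ≤ q) (hq₁ : q < 1) {R : ℝ}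
    (hb : Tendsto b l (𝓝 0)) (hf₀ : ∀ᶠ t in l, 0 ≤ f t) (hR : ∀ᶠ t in l, f t ≤ R) :
    Tendsto f l (𝓝 0) := by
  refine tendsto_order.2 ⟨fun a ha => hf₀.mono fun t ht => ha.trans_le ht, fun a ha => ?_⟩
  have ha₂ : 0 < a / 2 := half_pos ha
  obtain ⟨n, hn⟩ : ∃ n : ℕ, q ^ n * R < a / 2 :=
    (((tendsto_pow_atTop_nhds_zero_of_lt_one hq hq₁).mul_const R).eventually
      (eventually_lt_nhds (by simpa using ha₂))).exists
  filter_upwards [eventually_le_max_pow_mul_of_contraction hrec hg₁ hg₂ hq hq₁.le ha₂.le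
    (hb.eventually (eventually_le_nhds ha₂)) hR n] with t ht
  exact ht.trans_lt (max_lt (half_lt_self ha) (hn.trans (half_lt_self ha)))

end ContractionRecursion

theorem asymptotic_gain_recursion_general (Tmax R c ε : ℝ)
    (hc : 0 ≤ c) (hε : 1 < ε)
    (β : ℝ → ℝ → ℝ) (hβ : IsClassKL β)
    (ζ : ℝ → ℝ) (hζ : ∀ t, 0 < t → ζ t ∈ Set.Icc 0 R)
    (hrec : ∀ t, 8 * Tmax ≤ t →
      ζ t ≤ max (β c (t / 4)) (max ((1 / ε) * ζ (t / 2)) ((1 / ε) * ζ (t / 4)))) :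
    Filter.Tendsto ζ Filter.atTop (nhds 0) := by
  have hε₀ : 0 < ε := zero_lt_one.trans hε
  have hquarter : Tendsto (fun t : ℝ => t / 4) atTop atTop :=
    tendsto_id.atTop_div_const (by norm_num)
  have hpos : ∀ᶠ t : ℝ in atTop, 0 < t := eventually_gt_atTop 0
  exact tendsto_zero_of_contraction (b := fun t => β c (t / 4))
    (eventually_atTop.2 ⟨8 * Tmax, hrec⟩) (tendsto_id.atTop_div_const (by norm_num)) hquarter
    (by positivity) ((div_lt_one hε₀).2 hε) ((hβ.2 c hc).2.comp hquarter)
    (hpos.mono fun t ht => (hζ t ht).1) (hpos.mono fun t ht => (hζ t ht).2)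

/-- The key asymptotic-gain recursion (22) in the proof of Theorem 1:
a bounded function satisfying the contraction recursion tends to zero. -/
theorem asymptotic_gain_recursion (Tmax R c ε : ℝ)
    (hTmax : 0 < Tmax) (hR : 0 ≤ R) (hc : 0 ≤ c) (hε : 1 < ε)
    (β : ℝ → ℝ → ℝ) (hβ : IsClassKL β)
    (ζ : ℝ → ℝ) (hζ : ∀ t, 0 < t → ζ t ∈ Set.Icc 0 R)
    (hrec : ∀ t, 8 * Tmax ≤ t →
      ζ t ≤ max (β c (t / 4)) (max ((1 / ε) * ζ (t / 2)) ((1 / ε) * ζ (t / 4)))) :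
    Filter.Tendsto ζ Filter.atTop (nhds 0) :=
  asymptotic_gain_recursion_general Tmax R c ε hc hε β hβ ζ hζ hrec
end

section
/- Let b₁ > 0, c₁ > 0 be constants and let ψ ≥ 0, m ≥ 0, ι ≥ 0, a ≥ 0, x̄₁, x̄₂, F be real numbers with |F| ≤ ι·a + m·|x̄₁|. Define ϑ₁ := −(c₁ + b₁²/4 + m + ψ)·x̄₁/b₁. Then x̄₁·(F + b₁·ϑ₁ + b₁·x̄₂) ≤ −ψ·x̄₁² + (ι·a)²/(4·c₁) + x̄₂². -/
/-! The virtual controller cancels the drift up to the cross terms `x₁ F` and `b₁ x₁ x₂`;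
each of these is absorbed by Young's inequality `p x ≤ c x² + p² / (4c)`, the `c₁ x₁²`,
`m x₁²` and `b₁² x₁² / 4` parts of the controller gain paying for the quadratic terms. -/

open Filter Set

theorem mul_le_mul_sq_add_sq_div {c : ℝ} (hc : 0 < c) (p x : ℝ) :
    p * x ≤ c * x ^ 2 + p ^ 2 / (4 * c) := by
  have hsq : c * x ^ 2 + p ^ 2 / (4 * c) - p * x = (2 * c * x - p) ^ 2 / (4 * c) := by
    field_simp
    ring
  rw [← sub_nonneg, hsq]
  positivity

theorem mul_le_abs_mul_of_abs_le {x y B : ℝ} (h : |y| ≤ B) : x * y ≤ |x| * B :=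
  calc x * y ≤ |x * y| := le_abs_self _
    _ = |x| * |y| := abs_mul x y
    _ ≤ |x| * B := mul_le_mul_of_nonneg_left h (abs_nonneg x)

theorem lyapunov_estimate_first_step_general (b₁ c₁ ψ m ι a x₁ x₂ F : ℝ)
    (hb : 0 < b₁) (hc : 0 < c₁)
    (hF : |F| ≤ ι * a + m * |x₁|) :
    x₁ * (F + b₁ * (-(c₁ + b₁ ^ 2 / 4 + m + ψ) * x₁ / b₁) + b₁ * x₂) ≤
      -ψ * x₁ ^ 2 + (ι * a) ^ 2 / (4 * c₁) + x₂ ^ 2 := by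
  rw [mul_div_cancel₀ _ hb.ne']
  have hdrift : x₁ * F ≤ ι * a * |x₁| + m * x₁ ^ 2 :=
    calc x₁ * F ≤ |x₁| * (ι * a + m * |x₁|) := mul_le_abs_mul_of_abs_le hF
      _ = ι * a * |x₁| + m * x₁ ^ 2 := by rw [← sq_abs x₁]; ring
  have hdisturbance := mul_le_mul_sq_add_sq_div hc (ι * a) |x₁|
  have hcoupling := mul_le_mul_sq_add_sq_div one_pos (b₁ * x₁) x₂
  rw [sq_abs] at hdisturbance
  linear_combination hdrift + hdisturbance + hcoupling

/-- The pointwise Lyapunov derivative estimate in the first step (j = 1) of the proof of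
Lemma 2 for lower-triangular systems. -/
theorem lyapunov_estimate_first_step (b₁ c₁ ψ m ι a x₁ x₂ F : ℝ)
    (hb : 0 < b₁) (hc : 0 < c₁) (hψ : 0 ≤ ψ) (hm : 0 ≤ m) (hι : 0 ≤ ι) (ha : 0 ≤ a)
    (hF : |F| ≤ ι * a + m * |x₁|) :
    x₁ * (F + b₁ * (-(c₁ + b₁ ^ 2 / 4 + m + ψ) * x₁ / b₁) + b₁ * x₂) ≤
      -ψ * x₁ ^ 2 + (ι * a) ^ 2 / (4 * c₁) + x₂ ^ 2 :=
  lyapunov_estimate_first_step_general b₁ c₁ ψ m ι a x₁ x₂ F hb hc hF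
end
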